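/- Z-eigenpairs multiply under the Kronecker product: if (α, x) is a Z-eigenpair of B and (β, y) is a Z-eigenpair of C, then (αβ, x ⊗ y) is a Z-eigenpair of B ⊗ C; in particular ‖x ⊗ y‖₂ = 1. -/

import Mathlib

/-- Tensor Kronecker product of two order-`k` tensors, indexed by paired index families. -/
def tkron {k : ℕ} {ι κ : Fin k → Type*} (B : (∀ q, ι q) → ℝ) (C : (∀ q, κ q) → ℝ) :
    (∀ q, ι q × κ q) → ℝ :=
  fun idx => B (fun q => (idx q).1) * C (fun q => (idx q).2)

/-- A cubical tensor is supersymmetric if its entries are invariant under index permutation. -/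
def IsSupersymmetric {k : ℕ} {α : Type*} (T : (Fin k → α) → ℝ) : Prop :=
  ∀ (σ : Equiv.Perm (Fin k)) (j : Fin k → α), T (j ∘ σ) = T j

/-- `(T x^{k-1})_i = Σ_{j₂,…,j_k} T_{i j₂ … j_k} x_{j₂} ⋯ x_{j_k}`. -/
def tvec {α : Type*} [Fintype α] {k : ℕ} (T : (Fin (k + 1) → α) → ℝ) (x : α → ℝ)
    (i : α) : ℝ :=
  ∑ j : Fin k → α, T (Fin.cons i j) * ∏ p, x (j p)

/-- Z-eigenpairs multiply under the Kronecker product: if `(α, x)` and `(β, y)` are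
Z-eigenpairs of the supersymmetric tensors `B` and `C`, then `(αβ, x ⊗ y)` is a
Z-eigenpair of `B ⊗ C`; in particular `‖x ⊗ y‖₂ = 1`. -/
theorem tkron_Z_eigenpair {k n m : ℕ}
    (B : (Fin (k + 1) → Fin n) → ℝ) (C : (Fin (k + 1) → Fin m) → ℝ)
    (hBs : IsSupersymmetric B) (hCs : IsSupersymmetric C)
    (α β : ℝ) (x : Fin n → ℝ) (y : Fin m → ℝ)
    (hx : ∑ i, (x i) ^ 2 = 1) (hy : ∑ i, (y i) ^ 2 = 1)
    (hB : ∀ i, tvec B x i = α * x i)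
    (hC : ∀ i, tvec C y i = β * y i) :
    (∑ i : Fin n × Fin m, (x i.1 * y i.2) ^ 2 = 1) ∧
    (∀ i : Fin n × Fin m,
      tvec (tkron (ι := fun _ => Fin n) (κ := fun _ => Fin m) B C)
          (fun a => x a.1 * y a.2) i
        = (α * β) * (x i.1 * y i.2)) := by
  constructor
  · have h : (∑ i, (x i) ^ 2) * (∑ j, (y j) ^ 2)
        = ∑ i : Fin n × Fin m, (x i.1 * y i.2) ^ 2 := by
      rw [Finset.sum_mul_sum, Fintype.sum_prod_type]
      simp [mul_pow]
    rw [← h, hx, hy, one_mul]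
  · intro i
    have key : tvec (tkron (ι := fun _ => Fin n) (κ := fun _ => Fin m) B C)
        (fun a => x a.1 * y a.2) i = tvec B x i.1 * tvec C y i.2 := by
      unfold tvec tkron
      rw [Finset.sum_mul_sum]
      rw [← Equiv.sum_comp (Equiv.arrowProdEquivProdArrow (Fin k) (fun _ => Fin n) (fun _ => Fin m)).symm]
      rw [Fintype.sum_prod_type]
      congr 1; ext a; congr 1; ext b
      set j : Fin k → Fin n × Fin m :=
        (Equiv.arrowProdEquivProdArrow (Fin k) (fun _ => Fin n) (fun _ => Fin m)).symm (a, b) with hj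
      have h1 : (fun q => ((Fin.cons i j : Fin (k+1) → Fin n × Fin m) q).1)
          = Fin.cons i.1 a := by
        funext q
        refine Fin.cases ?_ ?_ q <;> simp [hj, Equiv.arrowProdEquivProdArrow]
      have h2 : (fun q => ((Fin.cons i j : Fin (k+1) → Fin n × Fin m) q).2)
          = Fin.cons i.2 b := by
        funext q
        refine Fin.cases ?_ ?_ q <;> simp [hj, Equiv.arrowProdEquivProdArrow]
      simp only [h1, h2]
      simp [hj, Equiv.arrowProdEquivProdArrow, Finset.prod_mul_distrib]
      ring
    rw [key, hB, hC]; ring
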